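/- Let G be an AH-algebra and let g ∈ G. Then g = g⁺ − g⁻, g⁺g⁻ = g⁻g⁺ = 0, 0 ≤ |g| = g⁺ + g⁻, and |g|, g⁺, g⁻ ∈ CC(g). Moreover, g⁺ and g⁻ are characterized by these properties: if a,b ∈ G satisfy g = a − b, ab = 0, and 0 ≤ a + b, then a = g⁺ and b = g⁻. -/

import Mathlib

/-- An e-ring `(R,E)`: an associative ring `R` with unity together with a set `E ⊆ R`
of effects, satisfying the Foulis axioms.  `E⁺` is realized as the additive submonoid
closure of `E` (the set of all finite sums of effects). -/
structure ERing (R : Type*) [Ring R] where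
  E : Set R
  zero_mem : (0 : R) ∈ E
  one_mem : (1 : R) ∈ E
  compl_mem : ∀ e ∈ E, 1 - e ∈ E
  epos_i : ∀ a ∈ AddSubmonoid.closure E, -a ∈ AddSubmonoid.closure E → a = 0
  epos_ii : ∀ a ∈ AddSubmonoid.closure E, 1 - a ∈ AddSubmonoid.closure E → a ∈ E
  epos_iii : ∀ a ∈ AddSubmonoid.closure E, ∀ b ∈ AddSubmonoid.closure E,
    a * b = b * a → a * b ∈ AddSubmonoid.closure E
  epos_iv : ∀ a ∈ AddSubmonoid.closure E, ∀ b ∈ AddSubmonoid.closure E,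
    a * b * a ∈ AddSubmonoid.closure E
  epos_v : ∀ a ∈ AddSubmonoid.closure E, ∀ b ∈ AddSubmonoid.closure E,
    a * b * a = 0 → a * b = 0 ∧ b * a = 0
  epos_vi : ∀ a ∈ AddSubmonoid.closure E, ∀ b ∈ AddSubmonoid.closure E,
    (a - b) ^ 2 ∈ AddSubmonoid.closure E
  zero_ne_one : (0 : R) ≠ 1

namespace ERing

variable {R : Type*} [Ring R] (er : ERing R)

/-- `E⁺`, the set of all finite sums of effects; the positive cone of the directed group. -/
def Epos : Set R := (AddSubmonoid.closure er.E : Set R)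

/-- The directed group `G = E⁺ - E⁺` of the e-ring. -/
def G : Set R := {g | ∃ a ∈ er.Epos, ∃ b ∈ er.Epos, g = a - b}

/-- The partial order on the directed group: `g ≤ h` iff `h - g ∈ E⁺`. -/
def le (g h : R) : Prop := h - g ∈ er.Epos

/-- The set of projections `P = {p ∈ G : p = p²}`. -/
def P : Set R := {p | p ∈ er.G ∧ p = p ^ 2}

/-- The commutant in `G` of a subset `A ⊆ G`. -/
def commutant (A : Set R) : Set R := {g | g ∈ er.G ∧ ∀ a ∈ A, g * a = a * g}

/-- The bicommutant in `G` of a subset `A ⊆ G`. -/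
def CC (A : Set R) : Set R := er.commutant (er.commutant A)

/-- `s` is the supremum of `A` within the subset `S` (w.r.t. the e-ring order). -/
def IsSupIn (S A : Set R) (s : R) : Prop :=
  s ∈ S ∧ (∀ a ∈ A, er.le a s) ∧ ∀ b ∈ S, (∀ a ∈ A, er.le a b) → er.le s b

/-- `s` is the infimum of `A` within the subset `S` (w.r.t. the e-ring order). -/
def IsInfIn (S A : Set R) (s : R) : Prop :=
  s ∈ S ∧ (∀ a ∈ A, er.le s a) ∧ ∀ b ∈ S, (∀ a ∈ A, er.le b a) → er.le b s

/-- Quadratic annihilation property. -/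
def HasQA : Prop := ∀ g ∈ er.G, ∀ h ∈ er.G, g * h ^ 2 * g = 0 → g * h = 0 ∧ h * g = 0

/-- Commutative Vigier property: every ascending sequence of pairwise commuting elements
of `G` bounded above in `G` has a supremum in `G` which double commutes with the sequence. -/
def HasCV : Prop :=
  ∀ g : ℕ → R, (∀ n, g n ∈ er.G) → (∀ n, er.le (g n) (g (n + 1))) →
    (∀ m n, g m * g n = g n * g m) → (∃ b ∈ er.G, ∀ n, er.le (g n) b) →
    ∃ s, er.IsSupIn er.G (Set.range g) s ∧ s ∈ er.CC (Set.range g)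

/-- `G` is an abstract Hermitian (AH) algebra: there is a semitransparent effect `½`,
`G` has quadratic annihilation, and `G` has the commutative Vigier property. -/
def IsAH : Prop := (∃ h ∈ er.E, h + h = 1) ∧ er.HasQA ∧ er.HasCV

end ERing

namespace ERing

variable {R : Type*} [Ring R] (er : ERing R)

/-- `m` is the absolute value `|g| = (g²)^(1/2)` of `g`: `m ∈ G`, `0 ≤ m`, `m² = g²`. -/
def IsAbs (g m : R) : Prop := m ∈ er.G ∧ er.le 0 m ∧ m ^ 2 = g ^ 2

/-- `a` is the positive part `g⁺ = ½(|g| + g)` of `g`, i.e. `a ∈ G` and `a + a = |g| + g`. -/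
def IsPosPart (g a : R) : Prop := a ∈ er.G ∧ ∃ m, er.IsAbs g m ∧ a + a = m + g

/-- `b` is the negative part `g⁻ = ½(|g| − g)` of `g`, i.e. `b ∈ G` and `b + b = |g| − g`. -/
def IsNegPart (g b : R) : Prop := b ∈ er.G ∧ ∃ m, er.IsAbs g m ∧ b + b = m - g

/-- `p` is the carrier projection `g°` of `g`. -/
def IsCarrier (g p : R) : Prop := p ∈ er.P ∧ ∀ h ∈ er.G, (g * h = 0 ↔ p * h = 0)

end ERing

/-!
Everything rests on the positive square root. For `0 ≤ h ≤ 1` the iteration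
`s₀ = 0`, `sₙ₊₁ = sₙ + ½(h - sₙ²)` is increasing, bounded by `1` and commutes with everything
commuting with `h`, so by the commutative Vigier property it has a supremum `s` in `CC(h)`;
the increments dominate `½(h - s²) ≥ 0`, and an Archimedean argument (again via the Vigier
property) forces `s² = h`. Scaling by powers of `½` handles general `h ≥ 0`. Quadratic
annihilation makes commuting positive square roots unique, so every positive `x` lies in
`CC(x²)`, and positive square roots are unique outright.

With `|g| ∈ CC(g²) ⊆ CC(g)`, all claims about `g⁺ = ½(|g| + g)` and `g⁻ = ½(|g| - g)` are
ring identities. For the characterization, `(a + b)² = (a - b)² = g²` once `ab = ba = 0`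
(and `ba = 0` follows from `ab = 0` by quadratic annihilation), so `a + b = |g|` by uniqueness.
-/

namespace ERing

variable {R : Type*} [Ring R] (er : ERing R)

section Cone

lemma epos_zero : (0 : R) ∈ er.Epos := AddSubmonoid.zero_mem _

lemma epos_add {x y : R} (hx : x ∈ er.Epos) (hy : y ∈ er.Epos) : x + y ∈ er.Epos :=
  AddSubmonoid.add_mem _ hx hy

lemma epos_nsmul {x : R} (hx : x ∈ er.Epos) (n : ℕ) : n • x ∈ er.Epos :=
  AddSubmonoid.nsmul_mem _ hx n

lemma epos_of_mem_E {x : R} (hx : x ∈ er.E) : x ∈ er.Epos := AddSubmonoid.subset_closure hx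

lemma epos_one : (1 : R) ∈ er.Epos := er.epos_of_mem_E er.one_mem

lemma natCast_mem_epos (n : ℕ) : (n : R) ∈ er.Epos := by
  simpa using er.epos_nsmul er.epos_one n

lemma mul_mem_epos {x y : R} (hx : x ∈ er.Epos) (hy : y ∈ er.Epos) (h : Commute x y) :
    x * y ∈ er.Epos :=
  er.epos_iii x hx y hy h

lemma eq_zero_of_add_eq_zero {x y : R} (hx : x ∈ er.Epos) (hy : y ∈ er.Epos) (h : x + y = 0) :
    x = 0 :=
  er.epos_i x hx (by rwa [neg_eq_of_add_eq_zero_left (by rwa [add_comm] at h)])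

lemma exists_natCast_sub_mem_epos {x : R} (hx : x ∈ er.Epos) :
    ∃ n : ℕ, (n : R) - x ∈ er.Epos := by
  induction hx using AddSubmonoid.closure_induction with
  | mem e he => exact ⟨1, by simpa using er.epos_of_mem_E (er.compl_mem e he)⟩
  | zero => exact ⟨0, by simpa using er.epos_zero⟩
  | add x y _ _ hx hy =>
    obtain ⟨n, hn⟩ := hx
    obtain ⟨m, hm⟩ := hy
    refine ⟨n + m, ?_⟩
    rw [Nat.cast_add, add_sub_add_comm]
    exact er.epos_add hn hm

protected lemma le_trans {x y z : R} (hxy : er.le x y) (hyz : er.le y z) : er.le x z := by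
  have := er.epos_add hyz hxy
  rwa [sub_add_sub_cancel] at this

lemma zero_le_iff {x : R} : er.le 0 x ↔ x ∈ er.Epos := by
  rw [le, sub_zero]

lemma mem_G_of_mem_epos {x : R} (hx : x ∈ er.Epos) : x ∈ er.G :=
  ⟨x, hx, 0, er.epos_zero, (sub_zero x).symm⟩

lemma one_mem_G : (1 : R) ∈ er.G := er.mem_G_of_mem_epos er.epos_one

lemma add_mem_G {x y : R} (hx : x ∈ er.G) (hy : y ∈ er.G) : x + y ∈ er.G := by
  obtain ⟨p, hp, q, hq, rfl⟩ := hx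
  obtain ⟨r, hr, t, ht, rfl⟩ := hy
  exact ⟨p + r, er.epos_add hp hr, q + t, er.epos_add hq ht, by abel⟩

lemma sub_mem_G {x y : R} (hx : x ∈ er.G) (hy : y ∈ er.G) : x - y ∈ er.G := by
  obtain ⟨p, hp, q, hq, rfl⟩ := hx
  obtain ⟨r, hr, t, ht, rfl⟩ := hy
  exact ⟨p + t, er.epos_add hp ht, q + r, er.epos_add hq hr, by abel⟩

lemma sq_mem_epos {x : R} (hx : x ∈ er.G) : x ^ 2 ∈ er.Epos := by
  obtain ⟨p, hp, q, hq, rfl⟩ := hx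
  exact er.epos_vi p hp q hq

lemma sq_sub_sq_mem_epos {x y : R} (h : Commute x y) (hadd : x + y ∈ er.Epos)
    (hsub : x - y ∈ er.Epos) : x ^ 2 - y ^ 2 ∈ er.Epos := by
  rw [h.sq_sub_sq]
  exact er.mul_mem_epos hadd hsub
    (((Commute.refl x).add_left h.symm).sub_right (h.add_left (Commute.refl y)))

end Cone

section Commutant

lemma mem_CC_singleton {x y : R} :
    x ∈ er.CC {y} ↔ x ∈ er.G ∧ ∀ k ∈ er.G, Commute k y → Commute x k := by
  simp [CC, commutant, Commute, SemiconjBy]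

lemma self_mem_CC_singleton {x : R} (hx : x ∈ er.G) : x ∈ er.CC {x} :=
  (er.mem_CC_singleton).2 ⟨hx, fun _ _ hk => hk.symm⟩

lemma CC_singleton_subset {x y : R} (h : ∀ k ∈ er.G, Commute k x → Commute k y) :
    er.CC {y} ⊆ er.CC {x} := fun z hz => by
  rw [mem_CC_singleton] at hz ⊢
  exact ⟨hz.1, fun k hk hkx => hz.2 k hk (h k hk hkx)⟩

lemma add_mem_CC {A : Set R} {x y : R} (hx : x ∈ er.CC A) (hy : y ∈ er.CC A) :
    x + y ∈ er.CC A :=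
  ⟨er.add_mem_G hx.1 hy.1, fun k hk => by rw [add_mul, mul_add, hx.2 k hk, hy.2 k hk]⟩

lemma sub_mem_CC {A : Set R} {x y : R} (hx : x ∈ er.CC A) (hy : y ∈ er.CC A) :
    x - y ∈ er.CC A :=
  ⟨er.sub_mem_G hx.1 hy.1, fun k hk => by rw [sub_mul, mul_sub, hx.2 k hk, hy.2 k hk]⟩

end Commutant

section Half

variable {c : R}

lemma half_mul_add_half_mul (hc : c + c = 1) (x : R) : c * x + c * x = x := by
  rw [← add_mul, hc, one_mul]

lemma eq_of_add_self_eq (hc : c + c = 1) {x y : R} (h : x + x = y + y) : x = y := by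
  have key : ∀ z : R, (z + z) * c = z := fun z => by rw [add_mul, ← mul_add, hc, mul_one]
  rw [← key x, ← key y, h]

lemma half_commute (hc : c + c = 1) (x : R) : Commute c x :=
  eq_of_add_self_eq hc <| by rw [← add_mul, hc, one_mul, ← mul_add, hc, mul_one]

lemma half_mul_add_self (hc : c + c = 1) (x : R) : c * (x + x) = x := by
  rw [mul_add, half_mul_add_half_mul hc]

lemma half_mul_mem_epos (hcE : c ∈ er.E) (hc : c + c = 1) {x : R} (hx : x ∈ er.Epos) :
    c * x ∈ er.Epos :=
  er.mul_mem_epos (er.epos_of_mem_E hcE) hx (half_commute hc x)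

lemma half_mul_mem_G (hcE : c ∈ er.E) (hc : c + c = 1) {x : R} (hx : x ∈ er.G) :
    c * x ∈ er.G := by
  obtain ⟨p, hp, q, hq, rfl⟩ := hx
  exact ⟨c * p, er.half_mul_mem_epos hcE hc hp, c * q, er.half_mul_mem_epos hcE hc hq,
    mul_sub c p q⟩

lemma mem_CC_of_add_self_mem (hc : c + c = 1) {A : Set R} {x : R} (hx : x ∈ er.G)
    (h : x + x ∈ er.CC A) : x ∈ er.CC A :=
  ⟨hx, fun k hk => eq_of_add_self_eq hc <| by rw [← add_mul, ← mul_add, h.2 k hk]⟩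

lemma mul_eq_zero_of_add_self_mul_add_self (hc : c + c = 1) {x y : R}
    (h : (x + x) * (y + y) = 0) : x * y = 0 := by
  refine eq_of_add_self_eq hc (eq_of_add_self_eq hc ?_)
  rw [add_zero, add_zero, ← h]
  noncomm_ring

end Half

section Archimedean

lemma eq_zero_of_forall_nsmul_le (hCV : er.HasCV) {e b : R} (he : e ∈ er.Epos) (hb : b ∈ er.G)
    (hle : ∀ n : ℕ, er.le (n • e) b) : e = 0 := by
  obtain ⟨v, ⟨hvG, hub, hlub⟩, -⟩ := hCV (fun n => n • e)
    (fun n => er.mem_G_of_mem_epos (er.epos_nsmul he n))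
    (fun n => by rwa [le, succ_nsmul, add_sub_cancel_left])
    (fun m n => (((Commute.refl e).smul_left m).smul_right n).eq) ⟨b, hb, hle⟩
  have hv : er.le v (v - e) := by
    refine hlub (v - e) (er.sub_mem_G hvG (er.mem_G_of_mem_epos he)) ?_
    rintro _ ⟨n, rfl⟩
    have : er.le ((n + 1) • e) v := hub _ ⟨n + 1, rfl⟩
    rwa [le, succ_nsmul, sub_add_eq_sub_sub_swap] at this
  exact er.epos_i e he (by rwa [le, sub_sub_cancel_left] at hv)

end Archimedean

section SquareRoot

def sqrtStep (c h x : R) : R := x + c * (h - x ^ 2)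

def sqrtSeq (c h : R) : ℕ → R
  | 0 => 0
  | n + 1 => sqrtStep c h (sqrtSeq c h n)

lemma commute_sqrtSeq {c h k : R} (hkc : Commute k c) (hkh : Commute k h) :
    ∀ n, Commute k (sqrtSeq c h n)
  | 0 => Commute.zero_right k
  | n + 1 => (commute_sqrtSeq hkc hkh n).add_right
      (hkc.mul_right (hkh.sub_right ((commute_sqrtSeq hkc hkh n).pow_right 2)))

lemma sqrtSeq_commute {c h : R} (hch : Commute c h) (m n : ℕ) :
    Commute (sqrtSeq c h m) (sqrtSeq c h n) :=
  commute_sqrtSeq (commute_sqrtSeq (Commute.refl c) hch m).symm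
    (commute_sqrtSeq hch.symm (Commute.refl h) m).symm n

variable {c : R}

lemma sqrtStep_sub_sqrtStep (hc : c + c = 1) (h x y : R) :
    sqrtStep c h x - sqrtStep c h y = c * ((1 - y) ^ 2 - (1 - x) ^ 2) := by
  rw [show (1 - y) ^ 2 - (1 - x) ^ 2 = ((x - y) + (x - y)) - (x ^ 2 - y ^ 2) by noncomm_ring,
    mul_sub, half_mul_add_self hc, sqrtStep, sqrtStep]
  noncomm_ring

lemma sqrtStep_mono (hcE : c ∈ er.E) (hc : c + c = 1) {h x y : R} (hxy : Commute x y)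
    (hyx : er.le y x) (hx1 : er.le x 1) (hy1 : er.le y 1) :
    er.le (sqrtStep c h y) (sqrtStep c h x) := by
  rw [le, sqrtStep_sub_sqrtStep hc]
  refine er.half_mul_mem_epos hcE hc (er.sq_sub_sq_mem_epos ?_ (er.epos_add hy1 hx1) ?_)
  · exact (Commute.one_left _).sub_left ((Commute.one_right y).sub_right hxy.symm)
  · rwa [sub_sub_sub_cancel_left]

lemma sqrtStep_le_one (hcE : c ∈ er.E) (hc : c + c = 1) {h x : R} (hx : x ∈ er.G)
    (hh1 : er.le h 1) : er.le (sqrtStep c h x) 1 := by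
  have hid : 1 - sqrtStep c h x = c * ((1 - x) ^ 2 + (1 - h)) := by
    rw [show (1 - x) ^ 2 + (1 - h) = ((1 - x) + (1 - x)) - (h - x ^ 2) by noncomm_ring,
      mul_sub, half_mul_add_self hc, sqrtStep]
    abel
  rw [le, hid]
  exact er.half_mul_mem_epos hcE hc
    (er.epos_add (er.sq_mem_epos (er.sub_mem_G er.one_mem_G hx)) hh1)

lemma sqrtSeq_mem_G (hcE : c ∈ er.E) (hc : c + c = 1) {h : R} (hh : h ∈ er.G) (n : ℕ) :
    sqrtSeq c h n ∈ er.G := by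
  induction n with
  | zero => exact er.mem_G_of_mem_epos er.epos_zero
  | succ n ih =>
    exact er.add_mem_G ih (er.half_mul_mem_G hcE hc
      (er.sub_mem_G hh (er.mem_G_of_mem_epos (er.sq_mem_epos ih))))

lemma sqrtSeq_le_one_and_mono (hcE : c ∈ er.E) (hc : c + c = 1) {h : R} (hh0 : h ∈ er.Epos)
    (hh1 : er.le h 1) (n : ℕ) :
    er.le (sqrtSeq c h n) 1 ∧ er.le (sqrtSeq c h n) (sqrtSeq c h (n + 1)) := by
  induction n with
  | zero => simpa [le, sqrtSeq, sqrtStep] using ⟨er.epos_one, er.half_mul_mem_epos hcE hc hh0⟩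
  | succ n ih =>
    have hfG := er.sqrtSeq_mem_G hcE hc (er.mem_G_of_mem_epos hh0)
    have hle := er.sqrtStep_le_one hcE hc (hfG n) hh1
    exact ⟨hle, er.sqrtStep_mono hcE hc (sqrtSeq_commute (half_commute hc h) (n + 1) n) ih.2
      hle ih.1⟩

lemma sqrtSeq_mem_epos (hcE : c ∈ er.E) (hc : c + c = 1) {h : R} (hh0 : h ∈ er.Epos)
    (hh1 : er.le h 1) (n : ℕ) : sqrtSeq c h n ∈ er.Epos := by
  induction n with
  | zero => exact er.epos_zero
  | succ n ih =>
    simpa only [add_sub_cancel] using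
      er.epos_add ih (er.sqrtSeq_le_one_and_mono hcE hc hh0 hh1 n).2

-- Each step of the sequence below `s` gains at least `½(h - s²)`.
lemma nsmul_half_sub_sq_le_sqrtSeq (hcE : c ∈ er.E) (hc : c + c = 1) {h s : R}
    (hh0 : h ∈ er.Epos) (hh1 : er.le h 1) (hfs : ∀ n, er.le (sqrtSeq c h n) s)
    (hsf : ∀ n, Commute s (sqrtSeq c h n)) (n : ℕ) :
    er.le (n • (c * (h - s ^ 2))) (sqrtSeq c h n) := by
  have hs0 : s ∈ er.Epos := by simpa [le, sqrtSeq] using hfs 0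
  induction n with
  | zero => simpa [le, sqrtSeq] using er.epos_zero
  | succ n ih =>
    set f := sqrtSeq c h
    have hincr : f (n + 1) - f n - c * (h - s ^ 2) = c * (s ^ 2 - f n ^ 2) := by
      simp only [f, sqrtSeq, sqrtStep]
      noncomm_ring
    rw [le, succ_nsmul, show f (n + 1) - (n • (c * (h - s ^ 2)) + c * (h - s ^ 2)) =
      (f n - n • (c * (h - s ^ 2))) + (f (n + 1) - f n - c * (h - s ^ 2)) by abel, hincr]
    exact er.epos_add ih (er.half_mul_mem_epos hcE hc (er.sq_sub_sq_mem_epos (hsf n)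
      (er.epos_add hs0 (er.sqrtSeq_mem_epos hcE hc hh0 hh1 n)) (hfs n)))

lemma mem_epos_and_sq_eq_of_isSup_sqrtSeq (hcE : c ∈ er.E) (hc : c + c = 1) (hCV : er.HasCV)
    {h s : R} (hh0 : h ∈ er.Epos) (hh1 : er.le h 1)
    (hs : er.IsSupIn er.G (Set.range (sqrtSeq c h)) s) (hsf : ∀ n, Commute s (sqrtSeq c h n)) :
    s ∈ er.Epos ∧ s ^ 2 = h := by
  obtain ⟨hsG, hub, hlub⟩ := hs
  have hbd := er.sqrtSeq_le_one_and_mono hcE hc hh0 hh1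
  have hfs : ∀ n, er.le (sqrtSeq c h n) s := fun n => hub _ ⟨n, rfl⟩
  have hs1 : er.le s 1 := hlub 1 er.one_mem_G (by rintro _ ⟨n, rfl⟩; exact (hbd n).1)
  have he : c * (h - s ^ 2) ∈ er.Epos := by
    -- `sqrtStep c h s` is again an upper bound of the sequence
    have hbound : er.le s (sqrtStep c h s) := by
      refine hlub _ (er.add_mem_G hsG (er.half_mul_mem_G hcE hc
        (er.sub_mem_G (er.mem_G_of_mem_epos hh0) (er.mem_G_of_mem_epos (er.sq_mem_epos hsG))))) ?_
      rintro _ ⟨n, rfl⟩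
      exact er.le_trans (hbd n).2 (er.sqrtStep_mono hcE hc (hsf n) (hfs n) hs1 (hbd n).1)
    simpa [le, sqrtStep] using hbound
  have he0 : c * (h - s ^ 2) = 0 := er.eq_zero_of_forall_nsmul_le hCV he er.one_mem_G fun n =>
    er.le_trans (er.nsmul_half_sub_sq_le_sqrtSeq hcE hc hh0 hh1 hfs hsf n) (hbd n).1
  refine ⟨by simpa [le, sqrtSeq] using hfs 0, (sub_eq_zero.1 ?_).symm⟩
  rw [← half_mul_add_half_mul hc (h - s ^ 2), he0, add_zero]

lemma exists_sqrt_of_le_one (hcE : c ∈ er.E) (hc : c + c = 1) (hCV : er.HasCV) {h : R}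
    (hh0 : h ∈ er.Epos) (hh1 : er.le h 1) :
    ∃ s ∈ er.CC {h}, s ∈ er.Epos ∧ s ^ 2 = h := by
  have hbd := er.sqrtSeq_le_one_and_mono hcE hc hh0 hh1
  have hfG := er.sqrtSeq_mem_G hcE hc (er.mem_G_of_mem_epos hh0)
  have hcomm : ∀ k, Commute k h → ∀ n, Commute k (sqrtSeq c h n) := fun k hk =>
    commute_sqrtSeq (half_commute hc k).symm hk
  obtain ⟨s, hsup, hsCC⟩ := hCV (sqrtSeq c h) hfG (fun n => (hbd n).2)
    (fun m n => (sqrtSeq_commute (half_commute hc h) m n).eq)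
    ⟨1, er.one_mem_G, fun n => (hbd n).1⟩
  have hsh : s ∈ er.CC {h} := er.mem_CC_singleton.2 ⟨hsup.1, fun k hk hkh =>
    hsCC.2 k ⟨hk, by rintro _ ⟨n, rfl⟩; exact (hcomm k hkh n).eq⟩⟩
  have hsf : ∀ n, Commute s (sqrtSeq c h n) := fun n =>
    (er.mem_CC_singleton.1 hsh).2 _ (hfG n) 
      (hcomm h (Commute.refl h) n).symm
  exact ⟨s, hsh, er.mem_epos_and_sq_eq_of_isSup_sqrtSeq hcE hc hCV hh0 hh1 hsup hsf⟩

lemma exists_sqrt_of_le_four_pow (hcE : c ∈ er.E) (hc : c + c = 1) (hCV : er.HasCV) (N : ℕ)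
    {h : R} (hh0 : h ∈ er.Epos) (hhN : er.le h ((4 : R) ^ N)) :
    ∃ s ∈ er.CC {h}, s ∈ er.Epos ∧ s ^ 2 = h := by
  induction N generalizing h with
  | zero => exact er.exists_sqrt_of_le_one hcE hc hCV hh0 (by rwa [pow_zero] at hhN)
  | succ N ih =>
    have hscale : c * (c * ((4 : R) ^ (N + 1) - h)) = 4 ^ N - c * (c * h) := by
      rw [pow_succ, show (4 : R) ^ N * 4 = (4 ^ N + 4 ^ N) + (4 ^ N + 4 ^ N) by noncomm_ring,
        mul_sub, mul_sub, half_mul_add_self hc, half_mul_add_self hc]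
    have hquarter {x : R} (hx : x ∈ er.Epos) : c * (c * x) ∈ er.Epos :=
      er.half_mul_mem_epos hcE hc (er.half_mul_mem_epos hcE hc hx)
    obtain ⟨t, htCC, ht0, ht2⟩ := ih (hquarter hh0) (by rw [le, ← hscale]; exact hquarter hhN)
    refine ⟨t + t, ?_, er.epos_add ht0 ht0, ?_⟩
    · have hsub : er.CC {c * (c * h)} ⊆ er.CC {h} := er.CC_singleton_subset fun k _ hk =>
        (half_commute hc k).symm.mul_right ((half_commute hc k).symm.mul_right hk)
      exact er.add_mem_CC (hsub htCC) (hsub htCC)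
    · rw [show (t + t) ^ 2 = (t ^ 2 + t ^ 2) + (t ^ 2 + t ^ 2) by noncomm_ring, ht2,
        half_mul_add_half_mul hc, half_mul_add_half_mul hc]

lemma exists_sqrt (hcE : c ∈ er.E) (hc : c + c = 1) (hCV : er.HasCV) {h : R}
    (hh : h ∈ er.Epos) : ∃ s ∈ er.CC {h}, s ∈ er.Epos ∧ s ^ 2 = h := by
  obtain ⟨N, hN⟩ := er.exists_natCast_sub_mem_epos hh
  refine er.exists_sqrt_of_le_four_pow hcE hc hCV N hh ?_
  have := er.epos_add (er.natCast_mem_epos (4 ^ N - N)) hN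
  rwa [Nat.cast_sub (Nat.lt_pow_self (by norm_num)).le, sub_add_sub_cancel, Nat.cast_pow,
    Nat.cast_ofNat] at this

end SquareRoot

section Uniqueness

lemma eq_zero_of_sq_eq_zero (hQA : er.HasQA) {x : R} (hx : x ∈ er.G) (h : x ^ 2 = 0) :
    x = 0 := by
  simpa using (hQA x hx 1 er.one_mem_G (by rwa [one_pow, mul_one, ← sq])).1

lemma mul_eq_zero_swap (hQA : er.HasQA) {x y : R} (hx : x ∈ er.G) (hy : y ∈ er.G)
    (h : x * y = 0) : y * x = 0 :=
  (hQA x hx y hy (by rw [sq, ← mul_assoc, h, zero_mul, zero_mul])).2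

lemma eq_of_sq_eq_of_commute (hQA : er.HasQA) {x y : R} (hx : x ∈ er.Epos) (hy : y ∈ er.Epos)
    (h : x ^ 2 = y ^ 2) (hxy : Commute x y) : x = y := by
  set u := x - y
  have huG : u ∈ er.G := er.sub_mem_G (er.mem_G_of_mem_epos hx) (er.mem_G_of_mem_epos hy)
  have hu2 : u ^ 2 ∈ er.Epos := er.sq_mem_epos huG
  have hsum : x * u ^ 2 + y * u ^ 2 = 0 := by
    rw [← add_mul, sq, ← mul_assoc, ← hxy.sq_sub_sq, h, sub_self, zero_mul]
  have hxu : x * u ^ 2 = 0 := er.eq_zero_of_add_eq_zero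
    (er.mul_mem_epos hx hu2 (((Commute.refl x).sub_right hxy).pow_right 2))
    (er.mul_mem_epos hy hu2 ((hxy.symm.sub_right (Commute.refl y)).pow_right 2)) hsum
  have hyu : y * u ^ 2 = 0 := by rwa [hxu, zero_add] at hsum
  have hu3 : u ^ 3 = 0 := by rw [pow_succ', sub_mul, hxu, hyu, sub_zero]
  refine sub_eq_zero.1 (er.eq_zero_of_sq_eq_zero hQA huG
    (er.eq_zero_of_sq_eq_zero hQA (er.mem_G_of_mem_epos hu2) ?_))
  rw [← pow_mul, pow_succ, hu3, zero_mul]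

lemma mem_CC_sq_of_mem_epos (hAH : er.IsAH) {x : R} (hx : x ∈ er.Epos) : x ∈ er.CC {x ^ 2} := by
  obtain ⟨⟨c, hcE, hc⟩, hQA, hCV⟩ := hAH
  have hxG := er.mem_G_of_mem_epos hx
  obtain ⟨s, hsCC, hs0, hs2⟩ := er.exists_sqrt hcE hc hCV (er.sq_mem_epos hxG)
  have hxs : Commute x s :=
    ((er.mem_CC_singleton.1 hsCC).2 x hxG ((Commute.refl x).pow_right 2)).symm
  rw [er.eq_of_sq_eq_of_commute hQA hx hs0 hs2.symm hxs, hs2]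
  exact hsCC

lemma eq_of_sq_eq (hAH : er.IsAH) {x y : R} (hx : x ∈ er.Epos) (hy : y ∈ er.Epos)
    (h : x ^ 2 = y ^ 2) : x = y := by
  have hyx : Commute y x := (er.mem_CC_singleton.1 (h ▸ er.mem_CC_sq_of_mem_epos hAH hy)).2 x
    (er.mem_G_of_mem_epos hx) ((Commute.refl x).pow_right 2)
  exact er.eq_of_sq_eq_of_commute hAH.2.1 hx hy h hyx.symm

end Uniqueness

end ERing

/-- In an AH-algebra, with `m = |g|`, `a = g⁺` and `b = g⁻`:
`g = g⁺ − g⁻`, `g⁺g⁻ = g⁻g⁺ = 0`, `0 ≤ |g| = g⁺ + g⁻`, and `|g|, g⁺, g⁻ ∈ CC(g)`;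
moreover `g⁺, g⁻` are characterized by: `g = a' − b'`, `a'b' = 0`, `0 ≤ a' + b'`
imply `a' = g⁺` and `b' = g⁻`. -/
theorem stmt8 {R : Type*} [Ring R] (er : ERing R) (hAH : er.IsAH)
    (g m a b : R) (hg : g ∈ er.G) (hm : er.IsAbs g m)
    (ha : a ∈ er.G) (hb : b ∈ er.G)
    (ha2 : a + a = m + g) (hb2 : b + b = m - g) :
    g = a - b ∧ a * b = 0 ∧ b * a = 0 ∧ er.le 0 m ∧ m = a + b ∧
    m ∈ er.CC {g} ∧ a ∈ er.CC {g} ∧ b ∈ er.CC {g} ∧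
    ∀ a' b', a' ∈ er.G → b' ∈ er.G → g = a' - b' → a' * b' = 0 →
      er.le 0 (a' + b') → a' = a ∧ b' = b := by
  obtain ⟨c, -, hc⟩ := hAH.1
  have hQA := hAH.2.1
  obtain ⟨-, hm0, hm2⟩ := hm
  have hmE : m ∈ er.Epos := er.zero_le_iff.1 hm0
  have hmCC : m ∈ er.CC {g} := er.CC_singleton_subset (fun _ _ hk => hk.pow_right 2)
    (hm2 ▸ er.mem_CC_sq_of_mem_epos hAH hmE)
  have hmg : Commute m g := (er.mem_CC_singleton.1 hmCC).2 g hg (Commute.refl g)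
  have hgCC := er.self_mem_CC_singleton hg
  have hab : a * b = 0 := ERing.mul_eq_zero_of_add_self_mul_add_self hc
    (by rw [ha2, hb2, ← hmg.sq_sub_sq, hm2, sub_self])
  have hgab : g = a - b := ERing.eq_of_add_self_eq hc (by rw [← add_sub_add_comm, ha2, hb2]; abel)
  have hmab : m = a + b := ERing.eq_of_add_self_eq hc (by rw [add_add_add_comm, ha2, hb2]; abel)
  refine ⟨hgab, hab, er.mul_eq_zero_swap hQA ha hb hab, hm0, hmab, hmCC,
    er.mem_CC_of_add_self_mem hc ha (ha2 ▸ er.add_mem_CC hmCC hgCC),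
    er.mem_CC_of_add_self_mem hc hb (hb2 ▸ er.sub_mem_CC hmCC hgCC), ?_⟩
  intro a' b' ha' hb' hg' hab' hm'
  have hsq : (a' + b') ^ 2 = m ^ 2 := by
    rw [hm2, hg', show (a' + b') ^ 2 = (a' - b') ^ 2 + ((a' * b' + b' * a') + (a' * b' + b' * a'))
      by noncomm_ring, hab', er.mul_eq_zero_swap hQA ha' hb' hab', add_zero, add_zero, add_zero]
  have hm' : a' + b' = m := er.eq_of_sq_eq hAH (er.zero_le_iff.1 hm') hmE hsq
  exact ⟨ERing.eq_of_add_self_eq hc (by rw [ha2, ← hm', hg']; abel),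
    ERing.eq_of_add_self_eq hc (by rw [hb2, ← hm', hg']; abel)⟩
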